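/- arXiv:1503.05721 — 6 statements merged into one kernel-verified Lean document; each statement's English description precedes it below -/
import Mathlib

section
/- Let A be a central supersolvable arrangement in R^d with filtration A = A_d ⊃ A_{d-1} ⊃ ... ⊃ A_1 where rank(A_i) = i, and fix a linear order on A such that every hyperplane of A_i \ A_{i-1} precedes every hyperplane of A_j \ A_{j-1} whenever i < j. Then an independent tuple (H_1, ..., H_k) with H_1 < ... < H_k contains no broken circuit if and only if it contains no 2-element broken circuit, i.e., no pair (H_i, H_j) such that there exists H < H_i with rank(H ∩ H_i ∩ H_j) = 2. -/
open Module Classical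

abbrev Hyp (d : ℕ) := Submodule ℝ (Fin d → ℝ)

noncomputable instance (d : ℕ) : DecidableEq (Hyp d) := Classical.decEq _

def IsLinHyp (d : ℕ) (H : Hyp d) : Prop := finrank ℝ H = d - 1

noncomputable def arrRank (d : ℕ) (S : Finset (Hyp d)) : ℕ :=
  d - finrank ℝ (S.inf id : Hyp d)

def ArrIndep (d : ℕ) (S : Finset (Hyp d)) : Prop := arrRank d S = S.card

def IsCircuit (d : ℕ) (S : Finset (Hyp d)) : Prop :=
  ¬ ArrIndep d S ∧ ∀ H ∈ S, ArrIndep d (S.erase H)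

def IsBrokenCircuit (d : ℕ) (A : Finset (Hyp d)) (ord : Hyp d → ℕ)
    (B : Finset (Hyp d)) : Prop :=
  ∃ H ∈ A, H ∉ B ∧ IsCircuit d (insert H B) ∧ ∀ H' ∈ B, ord H < ord H'

def IsNBC (d : ℕ) (A : Finset (Hyp d)) (ord : Hyp d → ℕ) (S : Finset (Hyp d)) : Prop :=
  S ⊆ A ∧ ArrIndep d S ∧ ∀ B ⊆ S, ¬ IsBrokenCircuit d A ord B

def arrComplement (d : ℕ) (A : Finset (Hyp d)) : Set (Fin d → ℝ) :=
  {x | ∀ H ∈ A, x ∉ (H : Set (Fin d → ℝ))}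

noncomputable def numChambers (d : ℕ) (A : Finset (Hyp d)) : ℕ :=
  Nat.card (ConnectedComponents (arrComplement d A))

structure SSFiltration (d : ℕ) (A : Finset (Hyp d)) (𝒜 : ℕ → Finset (Hyp d)) : Prop where
  zero : 𝒜 0 = ∅
  top : 𝒜 d = A
  mono : ∀ i < d, 𝒜 i ⊆ 𝒜 (i + 1)
  hyp : ∀ H ∈ A, IsLinHyp d H
  rank : ∀ i, 1 ≤ i → i ≤ d → arrRank d (𝒜 i) = i
  ss : ∀ i, 2 ≤ i → i ≤ d → ∀ H ∈ 𝒜 i, ∀ H' ∈ 𝒜 i, H ≠ H' →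
    ∃ H'' ∈ 𝒜 (i - 1), H ⊓ H' ≤ H''

def CompatOrder (d : ℕ) (𝒜 : ℕ → Finset (Hyp d)) (ord : Hyp d → ℕ) : Prop :=
  ∀ i j : ℕ, ∀ H ∈ 𝒜 i \ 𝒜 (i - 1), ∀ H' ∈ 𝒜 j \ 𝒜 (j - 1), i < j → ord H < ord H'

-- complexification
noncomputable def complexify (d : ℕ) (H : Hyp d) : Submodule ℂ (Fin d → ℂ) :=
  Submodule.span ℂ ((fun x : Fin d → ℝ => (fun i => (x i : ℂ))) '' (H : Set (Fin d → ℝ)))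

def cxComplement (d : ℕ) (A : Finset (Hyp d)) : Set (Fin d → ℂ) :=
  {z | ∀ H ∈ A, z ∉ (complexify d H : Set (Fin d → ℂ))}

section Aux
variable {d : ℕ}

lemma frk_le (p : Hyp d) : finrank ℝ p ≤ d := by
  have := Submodule.finrank_le p
  simpa using this

lemma frk_inf_hyp (p H : Hyp d) (hH : IsLinHyp d H) :
    finrank ℝ p ≤ finrank ℝ (p ⊓ H : Hyp d) + 1 := by
  have h1 := Submodule.finrank_sup_add_finrank_inf_eq p H
  have h2 : finrank ℝ (p ⊔ H : Hyp d) ≤ d := frk_le _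
  have h3 : finrank ℝ p ≤ d := frk_le p
  unfold IsLinHyp at hH
  omega

lemma frk_inf_finset (S : Finset (Hyp d)) (hS : ∀ H ∈ S, IsLinHyp d H)
    (p : Hyp d) :
    finrank ℝ p ≤ finrank ℝ (p ⊓ S.inf id : Hyp d) + S.card := by
  classical
  induction S using Finset.induction_on generalizing p with
  | empty =>
    rw [Finset.inf_empty, inf_top_eq]
    simp
  | @insert a S ha ih =>
    have hImem : ∀ H ∈ S, IsLinHyp d H := fun h hh => hS h (Finset.mem_insert_of_mem hh)
    have hA : IsLinHyp d a := hS a (Finset.mem_insert_self a S)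
    have e : finrank ℝ (p ⊓ (insert a S).inf id : Hyp d)
        = finrank ℝ ((p ⊓ a) ⊓ S.inf id : Hyp d) := by
      rw [Finset.inf_insert]
      simp only [id]
      rw [inf_assoc]
    have h1 : finrank ℝ p ≤ finrank ℝ (p ⊓ a : Hyp d) + 1 := frk_inf_hyp p a hA
    have h2 := ih hImem (p ⊓ a)
    have h3 : (insert a S).card = S.card + 1 := Finset.card_insert_of_notMem ha
    omega

lemma arrRank_le_card (S : Finset (Hyp d)) (hS : ∀ H ∈ S, IsLinHyp d H) :
    arrRank d S ≤ S.card := by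
  have h := frk_inf_finset S hS ⊤
  have h2 : finrank ℝ ((⊤ : Hyp d) ⊓ S.inf id : Hyp d) = finrank ℝ (S.inf id : Hyp d) := by
    rw [top_inf_eq]
  have h3 : finrank ℝ (⊤ : Hyp d) = d := by
    simpa using finrank_top ℝ (Fin d → ℝ)
  unfold arrRank
  omega

lemma arrRank_mono {S T : Finset (Hyp d)} (h : S ⊆ T) : arrRank d S ≤ arrRank d T := by
  have h1 : T.inf id ≤ S.inf id := Finset.inf_mono h
  have h2 := Submodule.finrank_mono h1
  unfold arrRank
  omega

lemma indep_subset {S T : Finset (Hyp d)} (hT : ∀ H ∈ T, IsLinHyp d H)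
    (hTS : S ⊆ T) (h : ArrIndep d T) : ArrIndep d S := by
  classical
  have hU : S ∪ T \ S = T := Finset.union_sdiff_of_subset hTS
  have hinf : T.inf id = S.inf id ⊓ (T \ S).inf id := by
    conv_lhs => rw [← hU]
    rw [Finset.inf_union]
  have h1 : finrank ℝ (S.inf id : Hyp d) ≤
      finrank ℝ (S.inf id ⊓ (T \ S).inf id : Hyp d) + (T \ S).card :=
    frk_inf_finset (T \ S) (fun H hH => hT H (Finset.mem_sdiff.mp hH).1) _
  rw [← hinf] at h1
  have h2 : arrRank d S ≤ S.card :=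
    arrRank_le_card S (fun H hH => hT H (hTS hH))
  have h3 : (T \ S).card = T.card - S.card := Finset.card_sdiff_of_subset hTS
  have h4 : S.card ≤ T.card := Finset.card_le_card hTS
  have h5 : finrank ℝ (T.inf id : Hyp d) ≤ finrank ℝ (S.inf id : Hyp d) :=
    Submodule.finrank_mono (Finset.inf_mono hTS)
  have h6 : finrank ℝ (T.inf id : Hyp d) ≤ d := frk_le _
  unfold ArrIndep arrRank at *
  omega

lemma two_le_d {x y : Hyp d} (hx : IsLinHyp d x) (hy : IsLinHyp d y) (hxy : x ≠ y) :
    2 ≤ d := by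
  by_contra hlt
  have hd : d - 1 = 0 := by omega
  unfold IsLinHyp at hx hy
  rw [hd] at hx hy
  exact hxy ((Submodule.finrank_eq_zero.mp hx).trans (Submodule.finrank_eq_zero.mp hy).symm)

lemma frk_inf_pair {x y : Hyp d} (hx : IsLinHyp d x) (hy : IsLinHyp d y) (hxy : x ≠ y) :
    finrank ℝ (x ⊓ y : Hyp d) = d - 2 := by
  have hd := two_le_d hx hy hxy
  have h1 := Submodule.finrank_sup_add_finrank_inf_eq x y
  have h2 : finrank ℝ (x ⊔ y : Hyp d) ≤ d := frk_le _
  have h3 : x ⊓ y < x := by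
    rcases lt_or_eq_of_le (inf_le_left : x ⊓ y ≤ x) with h | h
    · exact h
    · exfalso
      have hxley : x ≤ y := by rw [← h]; exact inf_le_right
      exact hxy (Submodule.eq_of_le_of_finrank_le hxley (by unfold IsLinHyp at hx hy; omega))
  have h4 := Submodule.finrank_lt_finrank_of_lt h3
  unfold IsLinHyp at hx hy
  omega

lemma pair_rank {x y : Hyp d} (hx : IsLinHyp d x) (hy : IsLinHyp d y) (hxy : x ≠ y) :
    arrRank d {x, y} = 2 := by
  have hd := two_le_d hx hy hxy
  have : ({x, y} : Finset (Hyp d)).inf id = x ⊓ y := by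
    simp [Finset.inf_insert]
  unfold arrRank
  rw [this, frk_inf_pair hx hy hxy]
  omega

lemma pair_indep {x y : Hyp d} (hx : IsLinHyp d x) (hy : IsLinHyp d y) (hxy : x ≠ y) :
    ArrIndep d {x, y} := by
  unfold ArrIndep
  rw [pair_rank hx hy hxy, Finset.card_insert_of_notMem (by simpa using hxy),
    Finset.card_singleton]

lemma triple_rank {x y z : Hyp d} (hx : IsLinHyp d x) (hy : IsLinHyp d y)
    (hxy : x ≠ y) (hle : x ⊓ y ≤ z) :
    arrRank d {z, x, y} = 2 := by
  have hd := two_le_d hx hy hxy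
  have e : ({z, x, y} : Finset (Hyp d)).inf id = x ⊓ y := by
    simp only [Finset.inf_insert, Finset.inf_singleton, id]
    exact inf_eq_right.mpr hle
  unfold arrRank
  rw [e, frk_inf_pair hx hy hxy]
  omega


lemma triple_card {x y z : Hyp d} (hxy : x ≠ y) (hzx : z ≠ x) (hzy : z ≠ y) :
    ({z, x, y} : Finset (Hyp d)).card = 3 :=
  Finset.card_eq_three.mpr ⟨z, x, y, hzx, hzy, hxy, rfl⟩

lemma triple_circuit {x y z : Hyp d} (hx : IsLinHyp d x) (hy : IsLinHyp d y)
    (hz : IsLinHyp d z) (hxy : x ≠ y) (hzx : z ≠ x) (hzy : z ≠ y)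
    (hle : x ⊓ y ≤ z) : IsCircuit d {z, x, y} := by
  constructor
  · unfold ArrIndep
    rw [triple_rank hx hy hxy hle, triple_card hxy hzx hzy]
    omega
  · intro w hw
    have e1 : ({z, x, y} : Finset (Hyp d)).erase z = {x, y} := by
      ext u
      simp only [Finset.mem_erase, Finset.mem_insert, Finset.mem_singleton]
      constructor
      · rintro ⟨hu, h | h | h⟩ <;> tauto
      · rintro (h | h) <;> subst h <;> exact ⟨by tauto, by tauto⟩
    have e2 : ({z, x, y} : Finset (Hyp d)).erase x = {z, y} := by
      ext u
      simp only [Finset.mem_erase, Finset.mem_insert, Finset.mem_singleton]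
      constructor
      · rintro ⟨hu, h | h | h⟩ <;> tauto
      · rintro (h | h) <;> subst h <;> exact ⟨by tauto, by tauto⟩
    have e3 : ({z, x, y} : Finset (Hyp d)).erase y = {z, x} := by
      ext u
      simp only [Finset.mem_erase, Finset.mem_insert, Finset.mem_singleton]
      constructor
      · rintro ⟨hu, h | h | h⟩ <;> tauto
      · rintro (h | h) <;> subst h <;> exact ⟨by tauto, by tauto⟩
    simp only [Finset.mem_insert, Finset.mem_singleton] at hw
    rcases hw with h | h | h <;> subst h
    · rw [e1]; exact pair_indep hx hy hxy
    · rw [e2]; exact pair_indep hz hy hzy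
    · rw [e3]; exact pair_indep hz hx hzx

lemma circuit_card {C : Finset (Hyp d)} (hhyp : ∀ H ∈ C, IsLinHyp d H)
    (hC : IsCircuit d C) (hd : 1 ≤ d) : 3 ≤ C.card := by
  by_contra hlt
  push_neg at hlt
  interval_cases hcard : C.card
  · refine hC.1 ?_
    have hc : C = ∅ := Finset.card_eq_zero.mp hcard
    subst hc
    unfold ArrIndep arrRank
    have h : finrank ℝ ((∅ : Finset (Hyp d)).inf id : Hyp d) = d := by
      rw [Finset.inf_empty]
      simpa using finrank_top ℝ (Fin d → ℝ)
    rw [h]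
    simp
  · obtain ⟨x, hx⟩ := Finset.card_eq_one.mp hcard
    subst hx
    refine hC.1 ?_
    unfold ArrIndep arrRank
    have := hhyp x (Finset.mem_singleton_self x)
    unfold IsLinHyp at this
    have hx1 : ({x} : Finset (Hyp d)).inf id = x := by simp
    rw [hx1, Finset.card_singleton, this]
    omega
  · obtain ⟨x, y, hxy, hx⟩ := Finset.card_eq_two.mp hcard
    subst hx
    exact hC.1 (pair_indep (hhyp x (by simp)) (hhyp y (by simp)) hxy)

lemma circuit_inf_le {C : Finset (Hyp d)} (hhyp : ∀ H ∈ C, IsLinHyp d H)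
    (hC : IsCircuit d C) {y : Hyp d} (hy : y ∈ C) : (C.erase y).inf id ≤ y := by
  have hind := hC.2 y hy
  have hcarde : (C.erase y).card = C.card - 1 := Finset.card_erase_of_mem hy
  have hle : arrRank d C ≤ C.card := arrRank_le_card C hhyp
  have hne : arrRank d C ≠ C.card := hC.1
  have hmono : arrRank d (C.erase y) ≤ arrRank d C := arrRank_mono (Finset.erase_subset _ _)
  have e1 : C.inf id ≤ (C.erase y).inf id := Finset.inf_mono (Finset.erase_subset _ _)
  have f1 : finrank ℝ ((C.erase y).inf id : Hyp d) ≤ finrank ℝ (C.inf id : Hyp d) := by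
    have hf := Submodule.finrank_mono e1
    have b1 : finrank ℝ (C.inf id : Hyp d) ≤ d := frk_le _
    have b2 : finrank ℝ ((C.erase y).inf id : Hyp d) ≤ d := frk_le _
    have hcpos : 1 ≤ C.card := Finset.card_pos.mpr ⟨y, hy⟩
    unfold ArrIndep arrRank at *
    omega
  have : C.inf id = (C.erase y).inf id := Submodule.eq_of_le_of_finrank_le e1 f1
  rw [← this]
  exact Finset.inf_le hy

end Aux

section Aux2
variable {d : ℕ} {A : Finset (Hyp d)} {𝒜 : ℕ → Finset (Hyp d)}

lemma chain_mono (hss : SSFiltration d A 𝒜) :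
    ∀ j, j ≤ d → ∀ i, i ≤ j → 𝒜 i ⊆ 𝒜 j := by
  intro j
  induction j with
  | zero =>
    intro _ i hi
    have : i = 0 := by omega
    subst this
    exact fun _ h => h
  | succ n ih =>
    intro hj i hi
    rcases Nat.lt_or_ge i (n + 1) with h | h
    · exact (ih (by omega) i (by omega)).trans (hss.mono n (by omega))
    · have : i = n + 1 := by omega
      subst this
      exact fun _ h => h

noncomputable def lev (𝒜 : ℕ → Finset (Hyp d)) (G : Hyp d) : ℕ := sInf {m | G ∈ 𝒜 m}

lemma lev_spec (hss : SSFiltration d A 𝒜) {G : Hyp d} (hG : G ∈ A) :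
    G ∈ 𝒜 (lev 𝒜 G) ∧ G ∉ 𝒜 (lev 𝒜 G - 1) ∧ 1 ≤ lev 𝒜 G ∧ lev 𝒜 G ≤ d := by
  have hd : d ∈ {m | G ∈ 𝒜 m} := by
    show G ∈ 𝒜 d
    rw [hss.top]; exact hG
  have h1 : G ∈ 𝒜 (lev 𝒜 G) := Nat.sInf_mem ⟨d, hd⟩
  have h4 : lev 𝒜 G ≤ d := Nat.sInf_le hd
  have h3 : 1 ≤ lev 𝒜 G := by
    by_contra h
    have h0 : lev 𝒜 G = 0 := by omega
    rw [h0, hss.zero] at h1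
    exact absurd h1 (Finset.notMem_empty G)
  have h2 : G ∉ 𝒜 (lev 𝒜 G - 1) :=
    Nat.notMem_of_lt_sInf (show lev 𝒜 G - 1 < lev 𝒜 G by omega)
  exact ⟨h1, h2, h3, h4⟩


lemma compat_lev (hss : SSFiltration d A 𝒜) {ord : Hyp d → ℕ}
    (hcomp : CompatOrder d 𝒜 ord) {G G' : Hyp d} (hG : G ∈ A) (hG' : G' ∈ A)
    (h : lev 𝒜 G < lev 𝒜 G') : ord G < ord G' := by
  obtain ⟨m1, m2, -, -⟩ := lev_spec hss hG
  obtain ⟨n1, n2, -, -⟩ := lev_spec hss hG'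
  exact hcomp (lev 𝒜 G) (lev 𝒜 G') G (Finset.mem_sdiff.mpr ⟨m1, m2⟩)
    G' (Finset.mem_sdiff.mpr ⟨n1, n2⟩) h

lemma sub_A (hss : SSFiltration d A 𝒜) {m : ℕ} (hm : m ≤ d) : 𝒜 m ⊆ A := by
  rw [← hss.top]
  exact chain_mono hss d le_rfl m hm

lemma closed_lemma (hss : SSFiltration d A 𝒜) {m : ℕ} (hm2 : 2 ≤ m) (hmd : m ≤ d)
    {y : Hyp d} (hy : y ∈ 𝒜 m) (ht : (𝒜 (m-1)).inf id ≤ y) : y ∈ 𝒜 (m-1) := by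
  by_contra hny
  set t := (𝒜 (m-1)).inf id with htdef
  have hyA : y ∈ A := sub_A hss hmd hy
  have hyh : IsLinHyp d y := hss.hyp y hyA
  have hrk1 : arrRank d (𝒜 (m-1)) = m - 1 := hss.rank (m-1) (by omega) (by omega)
  have hrkm : arrRank d (𝒜 m) = m := hss.rank m (by omega) hmd
  have hft : finrank ℝ (t : Hyp d) = d - m + 1 := by
    have := frk_le (t : Hyp d)
    unfold arrRank at hrk1
    rw [← htdef] at hrk1
    omega
  -- find z in 𝒜 m with ¬ t ≤ z
  have hfm : finrank ℝ ((𝒜 m).inf id : Hyp d) = d - m := by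
    have hb := frk_le ((𝒜 m).inf id : Hyp d)
    unfold arrRank at hrkm
    omega
  have hz : ∃ z ∈ 𝒜 m, ¬ t ≤ z := by
    by_contra hzn
    push_neg at hzn
    have hlow : t ≤ (𝒜 m).inf id := Finset.le_inf (fun z hz => hzn z hz)
    have hle := Submodule.finrank_mono hlow
    rw [hft, hfm] at hle
    omega
  obtain ⟨z, hzm, hzt⟩ := hz
  have hzA : z ∈ A := sub_A hss hmd hzm
  have hzh : IsLinHyp d z := hss.hyp z hzA
  have hyz : y ≠ z := fun h => hzt (h ▸ ht)
  obtain ⟨K, hKm, hKle⟩ := hss.ss m hm2 hmd y hy z hzm hyz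
  have hKA : K ∈ A := sub_A hss (by omega) hKm
  have hKh : IsLinHyp d K := hss.hyp K hKA
  have htK : t ≤ K := Finset.inf_le hKm
  have hfyz : finrank ℝ (y ⊓ z : Hyp d) = d - 2 := frk_inf_pair hyh hzh hyz
  -- finrank (t ⊓ z) = d - m
  have hftz : finrank ℝ (t ⊓ z : Hyp d) = d - m := by
    have h1 := Submodule.finrank_sup_add_finrank_inf_eq t z
    have h2 : finrank ℝ (t ⊔ z : Hyp d) ≤ d := frk_le _
    have h3 : t ⊓ z < t := lt_of_le_of_ne inf_le_left (fun h => hzt (by rw [← h]; exact inf_le_right))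
    have h4 := Submodule.finrank_lt_finrank_of_lt h3
    unfold IsLinHyp at hzh
    omega
  -- t ⊓ (y ⊓ z) = t ⊓ z
  have hinter : t ⊓ (y ⊓ z) = t ⊓ z := by
    apply le_antisymm
    · exact le_inf inf_le_left ((inf_le_right : t ⊓ (y ⊓ z) ≤ y ⊓ z).trans inf_le_right)
    · exact le_inf inf_le_left (le_inf (inf_le_left.trans ht) inf_le_right)
  -- w := t ⊔ (y ⊓ z) has finrank d - 1 and w ≤ y, so w = y
  have hw : t ⊔ (y ⊓ z) = y := by
    have hle1 : t ⊔ (y ⊓ z) ≤ y := sup_le ht inf_le_left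
    have h1 := Submodule.finrank_sup_add_finrank_inf_eq t (y ⊓ z)
    rw [hinter, hftz, hfyz, hft] at h1
    have h2 : finrank ℝ (t ⊔ (y ⊓ z) : Hyp d) ≤ d := frk_le _
    apply Submodule.eq_of_le_of_finrank_le hle1
    unfold IsLinHyp at hyh
    omega
  have hyK : y ≤ K := by
    rw [← hw]
    exact sup_le htK hKle
  have hyKeq : y = K := Submodule.eq_of_le_of_finrank_le hyK
    (by unfold IsLinHyp at hyh hKh; omega)
  exact hny (hyKeq ▸ hKm)

end Aux2

/-- In a supersolvable arrangement with a filtration-compatible order,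
an independent increasing tuple contains no broken circuit iff it contains no
2-element broken circuit. -/
theorem stmt1 (d k : ℕ) (A : Finset (Hyp d)) (𝒜 : ℕ → Finset (Hyp d)) (ord : Hyp d → ℕ)
    (hss : SSFiltration d A 𝒜)
    (hordinj : Set.InjOn ord (A : Set (Hyp d)))
    (hcomp : CompatOrder d 𝒜 ord)
    (H : Fin k → Hyp d) (hmem : ∀ t, H t ∈ A)
    (hinc : StrictMono (fun t => ord (H t)))
    (hindep : ArrIndep d (Finset.image H Finset.univ)) :
    (∀ B ⊆ Finset.image H Finset.univ, ¬ IsBrokenCircuit d A ord B) ↔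
    ¬ ∃ i j : Fin k, i < j ∧ ∃ H' ∈ A, ord H' < ord (H i) ∧
        arrRank d {H', H i, H j} = 2 := by
  constructor
  · -- no broken circuit → no 2-element broken circuit
    intro hnbc
    rintro ⟨i, j, hij, H', hH'A, hordlt, hrank⟩
    have hiA := hmem i
    have hjA := hmem j
    have hih : IsLinHyp d (H i) := hss.hyp _ hiA
    have hjh : IsLinHyp d (H j) := hss.hyp _ hjA
    have hH'h : IsLinHyp d H' := hss.hyp _ hH'A
    have hordij : ord (H i) < ord (H j) := hinc hij
    have hije : H i ≠ H j := fun e => by rw [e] at hordij; exact lt_irrefl _ hordij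
    have hH'i : H' ≠ H i := fun e => by rw [e] at hordlt; exact lt_irrefl _ hordlt
    have hH'j : H' ≠ H j := fun e => by
      rw [e] at hordlt
      exact absurd (hordlt.trans hordij) (lt_irrefl _)
    have hfij : finrank ℝ (H i ⊓ H j : Hyp d) = d - 2 := frk_inf_pair hih hjh hije
    have hinf3 : ({H', H i, H j} : Finset (Hyp d)).inf id = H' ⊓ (H i ⊓ H j) := by
      simp [Finset.inf_insert]
    have hle3 : ({H', H i, H j} : Finset (Hyp d)).inf id ≤ H i ⊓ H j := by
      rw [hinf3]; exact inf_le_right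
    have heq3 : ({H', H i, H j} : Finset (Hyp d)).inf id = H i ⊓ H j := by
      apply Submodule.eq_of_le_of_finrank_le hle3
      unfold arrRank at hrank
      have := frk_le (({H', H i, H j} : Finset (Hyp d)).inf id : Hyp d)
      omega
    have hle' : H i ⊓ H j ≤ H' := by
      rw [← heq3]
      exact Finset.inf_le (Finset.mem_insert_self _ _)
    refine hnbc {H i, H j} ?_ ⟨H', hH'A, ?_, ?_, ?_⟩
    · intro w hw
      simp only [Finset.mem_insert, Finset.mem_singleton] at hw
      rcases hw with h | h <;> subst h <;>
        exact Finset.mem_image.mpr ⟨_, Finset.mem_univ _, rfl⟩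
    · simp only [Finset.mem_insert, Finset.mem_singleton]
      push_neg
      exact ⟨hH'i, hH'j⟩
    · exact triple_circuit hih hjh hH'h hije hH'i hH'j hle'
    · intro w hw
      simp only [Finset.mem_insert, Finset.mem_singleton] at hw
      rcases hw with h | h <;> subst h
      · exact hordlt
      · exact hordlt.trans hordij
  · -- no 2-element broken circuit → no broken circuit
    intro hno B hB hbc
    obtain ⟨H₀, hH₀A, hH₀B, hcirc, hordmin⟩ := hbc
    have hd1 : 1 ≤ d := by
      by_contra h
      have hd0 : d = 0 := by omega
      subst hd0
      rw [← hss.top, hss.zero] at hH₀A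
      exact absurd hH₀A (Finset.notMem_empty _)
    have hCA : ∀ G ∈ insert H₀ B, G ∈ A := by
      intro G hG
      rcases Finset.mem_insert.mp hG with h | h
      · subst h; exact hH₀A
      · obtain ⟨a, -, rfl⟩ := Finset.mem_image.mp (hB h); exact hmem a
    have hChyp : ∀ G ∈ insert H₀ B, IsLinHyp d G := fun G hG => hss.hyp G (hCA G hG)
    have hcard3 : 3 ≤ (insert H₀ B).card := circuit_card hChyp hcirc hd1
    have hcardC : (insert H₀ B).card = B.card + 1 := Finset.card_insert_of_notMem hH₀B
    have hBne : B.Nonempty := Finset.card_pos.mp (by omega)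
    obtain ⟨y, hyB, hymax⟩ := Finset.exists_max_image B ord hBne
    have hyC : y ∈ insert H₀ B := Finset.mem_insert_of_mem hyB
    have hyA : y ∈ A := hCA y hyC
    obtain ⟨hym, hynm, hm1, hmd⟩ := lev_spec hss hyA
    have hlevle : ∀ G ∈ insert H₀ B, lev 𝒜 G ≤ lev 𝒜 y := by
      intro G hG
      by_contra hlt
      push_neg at hlt
      have h1 := compat_lev hss hcomp hyA (hCA G hG) hlt
      have hGor : ord G ≤ ord y := by
        rcases Finset.mem_insert.mp hG with h | h
        · subst h; exact (hordmin y hyB).le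
        · exact hymax G h
      omega
    have hCsub : insert H₀ B ⊆ 𝒜 (lev 𝒜 y) := by
      intro G hG
      exact chain_mono hss (lev 𝒜 y) hmd _ (hlevle G hG) (lev_spec hss (hCA G hG)).1
    have hm2 : 2 ≤ lev 𝒜 y := by
      have h1 : arrRank d B = B.card := by
        have h := hcirc.2 H₀ (Finset.mem_insert_self _ _)
        rwa [Finset.erase_insert hH₀B] at h
      have h2 : arrRank d B ≤ arrRank d (insert H₀ B) :=
        arrRank_mono (Finset.subset_insert _ _)
      have h3 : arrRank d (insert H₀ B) ≤ arrRank d (𝒜 (lev 𝒜 y)) := arrRank_mono hCsub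
      have h4 : arrRank d (𝒜 (lev 𝒜 y)) = lev 𝒜 y := hss.rank _ (by omega) hmd
      omega
    by_cases hcase : ∃ x ∈ B, x ≠ y ∧ lev 𝒜 x = lev 𝒜 y
    · obtain ⟨x, hxB, hxy, hxm⟩ := hcase
      have hxA : x ∈ A := hCA x (Finset.mem_insert_of_mem hxB)
      have hxmem : x ∈ 𝒜 (lev 𝒜 y) := hxm ▸ (lev_spec hss hxA).1
      obtain ⟨K, hKm, hKle⟩ := hss.ss (lev 𝒜 y) hm2 hmd x hxmem y hym hxy
      have hKA : K ∈ A := sub_A hss (by omega) hKm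
      have hlevK : lev 𝒜 K ≤ lev 𝒜 y - 1 := Nat.sInf_le hKm
      have hordK : ord K < ord x := compat_lev hss hcomp hKA hxA (by omega)
      obtain ⟨a, -, ha⟩ := Finset.mem_image.mp (hB hxB)
      obtain ⟨b, -, hb⟩ := Finset.mem_image.mp (hB hyB)
      have hordxy : ord x < ord y :=
        lt_of_le_of_ne (hymax x hxB) (fun h => hxy (hordinj hxA hyA h))
      have hab : a < b := by
        have h := hinc.lt_iff_lt (a := a) (b := b)
        rw [← h, ha, hb]
        exact hordxy
      exact hno ⟨a, b, hab, K, hKA,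
        by rw [ha]; exact hordK,
        by rw [ha, hb]; exact triple_rank (hss.hyp x hxA) (hss.hyp y hyA) hxy hKle⟩
    · push_neg at hcase
      have hlevB : ∀ G ∈ (insert H₀ B).erase y, G ∈ 𝒜 (lev 𝒜 y - 1) := by
        intro G hG
        obtain ⟨hGy, hGC⟩ := Finset.mem_erase.mp hG
        have hGA := hCA G hGC
        have hlev : lev 𝒜 G ≤ lev 𝒜 y - 1 := by
          rcases Finset.mem_insert.mp hGC with h | h
          · subst h
            obtain ⟨x₀, hx₀B, hx₀y⟩ : ∃ x₀ ∈ B, x₀ ≠ y := by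
              have hBc : 1 < B.card := by omega
              obtain ⟨x₀, hx₀, hne⟩ := Finset.exists_mem_ne hBc y
              exact ⟨x₀, hx₀, hne⟩
            have h1 : lev 𝒜 x₀ ≤ lev 𝒜 y - 1 := by
              have hne := hcase x₀ hx₀B hx₀y
              have hle := hlevle x₀ (Finset.mem_insert_of_mem hx₀B)
              omega
            have h2 : ¬ (lev 𝒜 x₀ < lev 𝒜 G) := fun hl => by
              have := compat_lev hss hcomp (hCA x₀ (Finset.mem_insert_of_mem hx₀B)) hGA hl
              have := hordmin x₀ hx₀B
              omega
            omega
          · have hne := hcase G h hGy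
            have hle := hlevle G hGC
            omega
        exact chain_mono hss (lev 𝒜 y - 1) (by omega) _ hlev (lev_spec hss hGA).1
      have hinfle : ((insert H₀ B).erase y).inf id ≤ y := circuit_inf_le hChyp hcirc hyC
      have htle : (𝒜 (lev 𝒜 y - 1)).inf id ≤ ((insert H₀ B).erase y).inf id :=
        Finset.le_inf (fun G hG => Finset.inf_le (hlevB G hG))
      exact hynm (closed_lemma hss hm2 hmd hym (htle.trans hinfle))
end

section
/- Let A be a central supersolvable arrangement with filtration A_d ⊃ ... ⊃ A_1 and linear order compatible with the filtration. If H_i and H_j are two distinct hyperplanes belonging to the same difference A_{h+1} \ A_h, then the pair (H_i, H_j) is a broken circuit, i.e., there exists H < min(H_i, H_j) such that (H, H_i, H_j) is a circuit (rank(H ∩ H_i ∩ H_j) = 2). -/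
open Module Classical

lemma filt_subset (d : ℕ) (A : Finset (Hyp d)) (𝒜 : ℕ → Finset (Hyp d))
    (hss : SSFiltration d A 𝒜) : ∀ i ≤ d, 𝒜 i ⊆ A := by
  have key : ∀ j, j ≤ d → ∀ i ≤ j, 𝒜 i ⊆ 𝒜 j := by
    intro j
    induction j with
    | zero => intro _ i hi; interval_cases i; exact subset_rfl
    | succ n ih =>
      intro hn i hi
      rcases Nat.lt_or_ge i (n + 1) with hc | hc
      · exact (ih (by omega) i (by omega)).trans (hss.mono n (by omega))
      · have : i = n + 1 := by omega
        subst this; exact subset_rfl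
  intro i hi
  rw [← hss.top]; exact key d le_rfl i hi

lemma inf_finrank (d : ℕ) (hd : 2 ≤ d) (P Q : Hyp d) (hP : finrank ℝ P = d - 1)
    (hQ : finrank ℝ Q = d - 1) (hne : P ≠ Q) :
    finrank ℝ (P ⊓ Q : Hyp d) = d - 2 := by
  have hfin : finrank ℝ (Fin d → ℝ) = d := by simp
  have hsuple : finrank ℝ (P ⊔ Q : Hyp d) ≤ d := by
    simpa using Submodule.finrank_le (P ⊔ Q : Hyp d)
  have hlt : P < P ⊔ Q := by
    rcases lt_or_eq_of_le (le_sup_left : P ≤ P ⊔ Q) with hc | hc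
    · exact hc
    · exfalso
      have hQP : Q ≤ P := le_sup_right.trans hc.ge
      exact hne ((Submodule.eq_of_le_of_finrank_eq hQP (by rw [hP, hQ])).symm)
  have hsupgt : d - 1 < finrank ℝ (P ⊔ Q : Hyp d) := by
    rw [← hP]; exact Submodule.finrank_lt_finrank_of_lt hlt
  have hsup : finrank ℝ (P ⊔ Q : Hyp d) = d := by omega
  have hkey := Submodule.finrank_sup_add_finrank_inf_eq P Q
  omega

lemma pair_arrRank (d : ℕ) (hd : 2 ≤ d) (P Q : Hyp d) (hP : finrank ℝ P = d - 1)
    (hQ : finrank ℝ Q = d - 1) (hne : P ≠ Q) :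
    arrRank d ({P, Q} : Finset (Hyp d)) = 2 := by
  have h1 := inf_finrank d hd P Q hP hQ hne
  have h2 : ({P, Q} : Finset (Hyp d)).inf id = P ⊓ Q := by
    simp [Finset.inf_insert]
  unfold arrRank
  rw [h2, h1]; omega

lemma pair_indep_s3 (d : ℕ) (hd : 2 ≤ d) (P Q : Hyp d) (hP : finrank ℝ P = d - 1)
    (hQ : finrank ℝ Q = d - 1) (hne : P ≠ Q) :
    ArrIndep d ({P, Q} : Finset (Hyp d)) := by
  unfold ArrIndep
  rw [pair_arrRank d hd P Q hP hQ hne,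
    Finset.card_insert_of_notMem (by simpa using hne), Finset.card_singleton]

/-- Two distinct hyperplanes in the same filtration difference form a
broken circuit: some earlier hyperplane completes them to a circuit (rank 2). -/
theorem stmt3 (d : ℕ) (A : Finset (Hyp d)) (𝒜 : ℕ → Finset (Hyp d)) (ord : Hyp d → ℕ)
    (hss : SSFiltration d A 𝒜)
    (hordinj : Set.InjOn ord (A : Set (Hyp d)))
    (hcomp : CompatOrder d 𝒜 ord)
    (h : ℕ) (hh : h + 1 ≤ d)
    (Hi Hj : Hyp d) (hne : Hi ≠ Hj)
    (hHi : Hi ∈ 𝒜 (h + 1) ∧ Hi ∉ 𝒜 h)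
    (hHj : Hj ∈ 𝒜 (h + 1) ∧ Hj ∉ 𝒜 h) :
    ∃ H ∈ A, H ≠ Hi ∧ H ≠ Hj ∧ ord H < ord Hi ∧ ord H < ord Hj ∧
      IsCircuit d {H, Hi, Hj} ∧ arrRank d {H, Hi, Hj} = 2 := by
  -- rule out h = 0
  rcases Nat.eq_zero_or_pos h with rfl | hpos
  · exfalso
    have hd1 : 1 ≤ d := hh
    have hr := hss.rank 1 le_rfl hh
    unfold arrRank at hr
    set L := (𝒜 1).inf id with hL
    have hLle : L ≤ Hi := Finset.inf_le hHi.1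
    have hLle' : L ≤ Hj := Finset.inf_le hHj.1
    have hAi : Hi ∈ A := filt_subset d A 𝒜 hss 1 hh hHi.1
    have hAj : Hj ∈ A := filt_subset d A 𝒜 hss 1 hh hHj.1
    have hiR : finrank ℝ Hi = d - 1 := hss.hyp Hi hAi
    have hjR : finrank ℝ Hj = d - 1 := hss.hyp Hj hAj
    have hLd : finrank ℝ L ≤ d - 1 := hiR ▸ Submodule.finrank_mono hLle
    have hLr : finrank ℝ L = d - 1 := by omega
    have e1 : L = Hi := Submodule.eq_of_le_of_finrank_eq hLle (by rw [hLr, hiR])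
    have e2 : L = Hj := Submodule.eq_of_le_of_finrank_eq hLle' (by rw [hLr, hjR])
    exact hne (e1 ▸ e2)
  · have hd2 : 2 ≤ d := by omega
    obtain ⟨H0, hH0mem, hle⟩ := hss.ss (h + 1) (by omega) hh Hi hHi.1 Hj hHj.1 hne
    simp only [Nat.add_sub_cancel] at hH0mem
    have hne1 : H0 ≠ Hi := fun e => hHi.2 (e ▸ hH0mem)
    have hne2 : H0 ≠ Hj := fun e => hHj.2 (e ▸ hH0mem)
    have hH0A : H0 ∈ A := filt_subset d A 𝒜 hss h (by omega) hH0mem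
    have hAi : Hi ∈ A := filt_subset d A 𝒜 hss (h + 1) hh hHi.1
    have hAj : Hj ∈ A := filt_subset d A 𝒜 hss (h + 1) hh hHj.1
    have h0R : finrank ℝ H0 = d - 1 := hss.hyp H0 hH0A
    have hiR : finrank ℝ Hi = d - 1 := hss.hyp Hi hAi
    have hjR : finrank ℝ Hj = d - 1 := hss.hyp Hj hAj
    -- ordering
    have hex : ∃ k, H0 ∈ 𝒜 k := ⟨h, hH0mem⟩
    set k := Nat.find hex with hk
    have hk1 : 1 ≤ k := by
      by_contra hc
      have hk0 : k = 0 := by omega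
      have hsp : H0 ∈ 𝒜 k := Nat.find_spec hex
      rw [hk0, hss.zero] at hsp
      exact absurd hsp (Finset.notMem_empty _)
    have hkh : k ≤ h := Nat.find_min' hex hH0mem
    have hH0k : H0 ∈ 𝒜 k \ 𝒜 (k - 1) := by
      refine Finset.mem_sdiff.mpr ⟨Nat.find_spec hex, ?_⟩
      exact Nat.find_min hex (by omega)
    have hordi : ord H0 < ord Hi := by
      refine hcomp k (h + 1) H0 hH0k Hi ?_ (by omega)
      simpa using Finset.mem_sdiff.mpr ⟨hHi.1, hHi.2⟩
    have hordj : ord H0 < ord Hj := by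
      refine hcomp k (h + 1) H0 hH0k Hj ?_ (by omega)
      simpa using Finset.mem_sdiff.mpr ⟨hHj.1, hHj.2⟩
    -- rank of the triple
    have hinfij := inf_finrank d hd2 Hi Hj hiR hjR hne
    have hinfS : ({H0, Hi, Hj} : Finset (Hyp d)).inf id = Hi ⊓ Hj := by
      have : ({H0, Hi, Hj} : Finset (Hyp d)).inf id = H0 ⊓ (Hi ⊓ Hj) := by
        simp [Finset.inf_insert]
      rw [this, inf_eq_right.mpr hle]
    have hrank2 : arrRank d ({H0, Hi, Hj} : Finset (Hyp d)) = 2 := by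
      unfold arrRank
      rw [hinfS, hinfij]; omega
    have hcard3 : ({H0, Hi, Hj} : Finset (Hyp d)).card = 3 := by
      rw [Finset.card_insert_of_notMem (by simp [hne1, hne2]),
        Finset.card_insert_of_notMem (by simpa using hne), Finset.card_singleton]
    have e1 : ({H0, Hi, Hj} : Finset (Hyp d)).erase H0 = {Hi, Hj} :=
      Finset.erase_insert (by simp [hne1, hne2])
    have e2 : ({H0, Hi, Hj} : Finset (Hyp d)).erase Hi = {H0, Hj} := by
      rw [Finset.erase_insert_of_ne hne1, Finset.erase_insert (by simpa using hne)]
    have e3 : ({H0, Hi, Hj} : Finset (Hyp d)).erase Hj = {H0, Hi} := by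
      rw [Finset.erase_insert_of_ne hne2,
        Finset.erase_insert_of_ne hne, Finset.erase_singleton]; rfl
    refine ⟨H0, hH0A, hne1, hne2, hordi, hordj, ⟨?_, ?_⟩, hrank2⟩
    · intro hcon
      unfold ArrIndep at hcon
      rw [hrank2, hcard3] at hcon
      omega
    · intro H hH
      rcases Finset.mem_insert.mp hH with rfl | hH
      · rw [e1]; exact pair_indep_s3 d hd2 Hi Hj hiR hjR hne
      rcases Finset.mem_insert.mp hH with rfl | hH
      · rw [e2]; exact pair_indep_s3 d hd2 H0 Hj h0R hjR hne2
      · rw [Finset.mem_singleton.mp hH] at *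
        rw [e3]; exact pair_indep_s3 d hd2 H0 Hi h0R hiR hne1
end

section
/- Let A be a central supersolvable arrangement with compatible linear order. If H_i ∈ A_{h_i+1} \ A_{h_i} and H_j ∈ A_{h_j+1} \ A_{h_j} with h_i < h_j, then for every hyperplane H with H < H_i one has rank(H ∩ H_i ∩ H_j) = 3; in particular the pair (H_i, H_j) is not a broken circuit. -/
open Module Classical

lemma chainSub {d : ℕ} {A : Finset (Hyp d)} {𝒜 : ℕ → Finset (Hyp d)}
    (hss : SSFiltration d A 𝒜) {a b : ℕ} (hab : a ≤ b) (hbd : b ≤ d) :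
    𝒜 a ⊆ 𝒜 b := by
  induction b with
  | zero =>
    obtain rfl : a = 0 := by omega
    exact subset_rfl
  | succ n ih =>
    rcases Nat.eq_or_lt_of_le hab with h | h
    · exact h ▸ subset_rfl
    · exact (ih (by omega) (by omega)).trans (hss.mono n (by omega))

lemma memA {d : ℕ} {A : Finset (Hyp d)} {𝒜 : ℕ → Finset (Hyp d)}
    (hss : SSFiltration d A 𝒜) {a : ℕ} (had : a ≤ d) {H : Hyp d} (hH : H ∈ 𝒜 a) :
    H ∈ A := hss.top ▸ chainSub hss had le_rfl hH

lemma finrankA {d : ℕ} {A : Finset (Hyp d)} {𝒜 : ℕ → Finset (Hyp d)}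
    (hss : SSFiltration d A 𝒜) {a : ℕ} (had : a ≤ d) {H : Hyp d} (hH : H ∈ 𝒜 a) :
    finrank ℝ H = d - 1 := hss.hyp H (memA hss had hH)

lemma inf_two {d : ℕ} {H H' : Hyp d} (h : finrank ℝ H = d - 1)
    (h' : finrank ℝ H' = d - 1) (hne : H ≠ H') (hd : 2 ≤ d) :
    finrank ℝ (H ⊓ H' : Hyp d) = d - 2 := by
  have hfin : finrank ℝ (Fin d → ℝ) = d := Module.finrank_fin_fun ℝ
  have hsne : H ≠ H ⊔ H' := by
    intro he
    exact hne (Submodule.eq_of_le_of_finrank_le (le_sup_right.trans he.ge)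
      (by omega)).symm
  have h1 : finrank ℝ H < finrank ℝ (H ⊔ H' : Hyp d) :=
    Submodule.finrank_lt_finrank_of_lt (lt_of_le_of_ne le_sup_left hsne)
  have h2 : finrank ℝ (H ⊔ H' : Hyp d) ≤ d := le_trans (Submodule.finrank_le _) hfin.le
  have key := Submodule.finrank_sup_add_finrank_inf_eq H H'
  omega

lemma inf_more {d : ℕ} {U W : Hyp d} {u : ℕ} (h : finrank ℝ U = u)
    (h' : finrank ℝ W = d - 1) (hnle : ¬ U ≤ W) (hd : 1 ≤ d) :
    finrank ℝ (U ⊓ W : Hyp d) = u + (d - 1) - d := by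
  have hfin : finrank ℝ (Fin d → ℝ) = d := Module.finrank_fin_fun ℝ
  have hsne : W ≠ U ⊔ W := by
    intro he
    exact hnle (le_sup_left.trans he.ge)
  have h1 : finrank ℝ W < finrank ℝ (U ⊔ W : Hyp d) :=
    Submodule.finrank_lt_finrank_of_lt (lt_of_le_of_ne le_sup_right hsne)
  have h2 : finrank ℝ (U ⊔ W : Hyp d) ≤ d := le_trans (Submodule.finrank_le _) hfin.le
  have h3 : finrank ℝ (U ⊓ W : Hyp d) ≤ finrank ℝ U := Submodule.finrank_mono inf_le_left
  have key := Submodule.finrank_sup_add_finrank_inf_eq U W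
  omega

/-- Key supersolvability lemma: a hyperplane of `𝒜 (i+1)` that is not in `𝒜 i`
cannot contain the intersection of `𝒜 i`. -/
lemma not_contain_inf {d : ℕ} {A : Finset (Hyp d)} {𝒜 : ℕ → Finset (Hyp d)}
    (hss : SSFiltration d A 𝒜) {i : ℕ} (hi1 : 1 ≤ i) (hid : i + 1 ≤ d)
    {K : Hyp d} (hK : K ∈ 𝒜 (i + 1)) (hKn : K ∉ 𝒜 i)
    (hZ : (𝒜 i).inf id ≤ K) : False := by
  have hranki := hss.rank i hi1 (by omega)
  have hranki1 := hss.rank (i + 1) (by omega) hid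
  unfold arrRank at hranki hranki1
  have hfin : finrank ℝ (Fin d → ℝ) = d := Module.finrank_fin_fun ℝ
  have hZle : finrank ℝ ((𝒜 i).inf id : Hyp d) ≤ d := le_trans (Submodule.finrank_le _) hfin.le
  have hZ1le : finrank ℝ ((𝒜 (i+1)).inf id : Hyp d) ≤ d := le_trans (Submodule.finrank_le _) hfin.le
  -- some G ∈ 𝒜 (i+1) with ¬ Z ≤ G
  have hG : ∃ G ∈ 𝒜 (i + 1), ¬ (𝒜 i).inf id ≤ G := by
    by_contra h
    push_neg at h
    have : (𝒜 i).inf id ≤ (𝒜 (i + 1)).inf id := Finset.le_inf h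
    have := Submodule.finrank_mono this
    omega
  obtain ⟨G, hGmem, hGnle⟩ := hG
  have hKG : K ≠ G := fun he => hGnle (he ▸ hZ)
  obtain ⟨M, hMmem, hMle⟩ := hss.ss (i + 1) (by omega) hid K hK G hGmem hKG
  simp only [Nat.add_sub_cancel] at hMmem
  have hZM : (𝒜 i).inf id ≤ M := Finset.inf_le hMmem
  have hMK : M ≠ K := fun he => hKn (he ▸ hMmem)
  -- finrank facts
  have hfK : finrank ℝ K = d - 1 := finrankA hss hid hK
  have hfG : finrank ℝ G = d - 1 := finrankA hss hid hGmem
  have hfM : finrank ℝ M = d - 1 := finrankA hss (by omega) hMmem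
  have h1 : finrank ℝ (K ⊓ G : Hyp d) = d - 2 := inf_two hfK hfG hKG (by omega)
  have h2 : finrank ℝ (K ⊓ M : Hyp d) = d - 2 :=
    inf_two hfK hfM hMK.symm (by omega)
  have hle : (K ⊓ G : Hyp d) ≤ K ⊓ M := le_inf inf_le_left hMle
  have heq : (K ⊓ G : Hyp d) = K ⊓ M :=
    Submodule.eq_of_le_of_finrank_le hle (by omega)
  have : (𝒜 i).inf id ≤ K ⊓ M := le_inf hZ hZM
  rw [← heq] at this
  exact hGnle (this.trans inf_le_right)

/-- Two hyperplanes from different filtration differences never form a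
broken circuit: for any earlier hyperplane H the triple has rank 3. -/
theorem stmt4 (d : ℕ) (A : Finset (Hyp d)) (𝒜 : ℕ → Finset (Hyp d)) (ord : Hyp d → ℕ)
    (hss : SSFiltration d A 𝒜)
    (hordinj : Set.InjOn ord (A : Set (Hyp d)))
    (hcomp : CompatOrder d 𝒜 ord)
    (hi hj : ℕ) (hij : hi < hj) (hjd : hj + 1 ≤ d)
    (Hi Hj : Hyp d)
    (hHi : Hi ∈ 𝒜 (hi + 1) ∧ Hi ∉ 𝒜 hi)
    (hHj : Hj ∈ 𝒜 (hj + 1) ∧ Hj ∉ 𝒜 hj) :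
    (∀ H ∈ A, ord H < ord Hi → arrRank d {H, Hi, Hj} = 3) ∧
    ¬ IsBrokenCircuit d A ord {Hi, Hj} := by
  classical
  have hjd' : hj ≤ d := by omega
  have key : ∀ H ∈ A, ord H < ord Hi → arrRank d {H, Hi, Hj} = 3 := by
    intro H hHA hord
    have hex : ∃ k, H ∈ 𝒜 k := ⟨d, hss.top ▸ hHA⟩
    have hkmem : H ∈ 𝒜 (Nat.find hex) := Nat.find_spec hex
    set k := Nat.find hex with hkdef
    have hk1 : 1 ≤ k := by
      by_contra h
      have hk0 : k = 0 := by omega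
      rw [hk0, hss.zero] at hkmem
      exact absurd hkmem (Finset.notMem_empty H)
    have hkle : k ≤ hi + 1 := by
      by_contra h
      push_neg at h
      have hHmem : H ∈ 𝒜 k \ 𝒜 (k - 1) :=
        Finset.mem_sdiff.mpr ⟨hkmem, Nat.find_min hex (by omega)⟩
      have hHimem : Hi ∈ 𝒜 (hi + 1) \ 𝒜 ((hi + 1) - 1) :=
        Finset.mem_sdiff.mpr ⟨hHi.1, by simpa using hHi.2⟩
      have := hcomp (hi + 1) k Hi hHimem H hHmem h
      omega
    have hHhi1 : H ∈ 𝒜 (hi + 1) := chainSub hss hkle (by omega) hkmem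
    have hHne : H ≠ Hi := fun he => by simp [he] at hord
    rcases Nat.eq_zero_or_pos hi with h0 | hpos
    · exfalso
      subst h0
      have hrank1 := hss.rank 1 le_rfl (by omega)
      unfold arrRank at hrank1
      have hfH : finrank ℝ H = d - 1 := finrankA hss (by omega) hHhi1
      have hfHi : finrank ℝ Hi = d - 1 := finrankA hss (by omega) hHi.1
      have h1 : (𝒜 1).inf id ≤ H := Finset.inf_le hHhi1
      have h2 : (𝒜 1).inf id ≤ Hi := Finset.inf_le hHi.1
      have hfZ : finrank ℝ ((𝒜 1).inf id : Hyp d) ≤ d - 1 :=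
        le_trans (Submodule.finrank_mono h1) hfH.le
      have e1 : (𝒜 1).inf id = H := Submodule.eq_of_le_of_finrank_le h1 (by omega)
      have e2 : (𝒜 1).inf id = Hi := Submodule.eq_of_le_of_finrank_le h2 (by omega)
      exact hHne (e1 ▸ e2)
    have hd3 : 3 ≤ d := by omega
    have hHinhj : H ∈ 𝒜 hj := chainSub hss (by omega) hjd' hHhi1
    have hHiinhj : Hi ∈ 𝒜 hj := chainSub hss (by omega) hjd' hHi.1
    have hfH : finrank ℝ H = d - 1 := finrankA hss hjd' hHinhj
    have hfHi : finrank ℝ Hi = d - 1 := finrankA hss hjd' hHiinhj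
    have hfHj : finrank ℝ Hj = d - 1 := finrankA hss hjd hHj.1
    have hnle : ¬ (H ⊓ Hi : Hyp d) ≤ Hj := by
      intro hle
      have hZ : ((𝒜 hj).inf id : Hyp d) ≤ Hj :=
        (le_inf (Finset.inf_le hHinhj) (Finset.inf_le hHiinhj)).trans hle
      exact not_contain_inf hss (by omega) hjd hHj.1 hHj.2 hZ
    have h1 : finrank ℝ (H ⊓ Hi : Hyp d) = d - 2 := inf_two hfH hfHi hHne (by omega)
    have h2 : finrank ℝ ((H ⊓ Hi) ⊓ Hj : Hyp d) = (d - 2) + (d - 1) - d :=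
      inf_more h1 hfHj hnle (by omega)
    have hinf : ({H, Hi, Hj} : Finset (Hyp d)).inf id = (H ⊓ Hi) ⊓ Hj := by
      simp [Finset.inf_insert, inf_assoc]
    unfold arrRank
    rw [hinf, h2]
    omega
  refine ⟨key, ?_⟩
  rintro ⟨H, hHA, hHnot, hcirc, hord⟩
  have hordi : ord H < ord Hi := hord Hi (by simp)
  have h3 := key H hHA hordi
  have hHiHj : Hi ≠ Hj := by
    intro he
    exact hHj.2 (he ▸ chainSub hss (by omega) hjd' hHi.1)
  have hcard : (insert H {Hi, Hj} : Finset (Hyp d)).card = 3 := by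
    rw [Finset.card_insert_of_notMem hHnot,
      Finset.card_insert_of_notMem (by simp [hHiHj]), Finset.card_singleton]
  exact hcirc.1 (by unfold ArrIndep; rw [hcard]; exact h3)
end

section
/- Let A be a central supersolvable arrangement in R^d with filtration A_d ⊃ ... ⊃ A_1. For every element X of the intersection lattice L(A) of codimension k, there exist indices i_1 < i_2 < ... < i_k and hyperplanes H_j ∈ A_{i_j} \ A_{i_j - 1} (j = 1, ..., k) such that H_1 ∩ ... ∩ H_k = X. -/
open Module Classical

section Aux

open Module Finset

private lemma totdim (d : ℕ) : finrank ℝ (Fin d → ℝ) = d := Module.finrank_fin_fun ℝ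

private lemma sub_le_total {d : ℕ} (U : Hyp d) : finrank ℝ U ≤ d :=
  le_trans (Submodule.finrank_le U) (le_of_eq (totdim d))

private lemma inf_with_hyp_ge {d : ℕ} (U H : Hyp d) (hH : finrank ℝ H = d - 1) (hd : 1 ≤ d) :
    finrank ℝ U - 1 ≤ finrank ℝ (U ⊓ H : Hyp d) := by
  have h1 := Submodule.finrank_sup_add_finrank_inf_eq U H
  have h2 := sub_le_total (U ⊔ H)
  omega

private lemma inf_two_hyps {d : ℕ} {H H' : Hyp d} (hH : finrank ℝ H = d - 1)
    (hH' : finrank ℝ H' = d - 1) (hne : H ≠ H') (hd : 1 ≤ d) :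
    finrank ℝ (H ⊓ H' : Hyp d) = d - 2 := by
  have hlt : H < H ⊔ H' := by
    refine lt_of_le_of_ne le_sup_left (fun he => hne ?_)
    have h2 : H' ≤ H := he ▸ le_sup_right
    exact (Submodule.eq_of_le_of_finrank_le h2 (by omega)).symm
  have h3 := Submodule.finrank_lt_finrank_of_lt hlt
  have h4 := sub_le_total (H ⊔ H')
  have h5 := Submodule.finrank_sup_add_finrank_inf_eq H H'
  omega

private lemma strictMono_snoc {n : ℕ} {f : Fin n → ℕ} {a : ℕ} (hf : StrictMono f)
    (ha : ∀ t, f t < a) : StrictMono (Fin.snoc f a) := by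
  intro s t hst
  rcases Fin.eq_castSucc_or_eq_last t with ⟨t', rfl⟩ | rfl
  · rcases Fin.eq_castSucc_or_eq_last s with ⟨s', rfl⟩ | rfl
    · simp only [Fin.snoc_castSucc]
      exact hf (by exact_mod_cast hst)
    · exact absurd hst (by simp [Fin.lt_iff_val_lt_val])
  · rcases Fin.eq_castSucc_or_eq_last s with ⟨s', rfl⟩ | rfl
    · simp only [Fin.snoc_castSucc, Fin.snoc_last]
      exact ha s'
    · exact absurd hst (lt_irrefl _)

private lemma iInf_snoc {d n : ℕ} (f : Fin n → Hyp d) (a : Hyp d) :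
    (⨅ t : Fin (n+1), (Fin.snoc f a : Fin (n+1) → Hyp d) t) = (⨅ t, f t) ⊓ a := by
  apply le_antisymm
  · refine le_inf (le_iInf fun t => ?_) ?_
    · simpa using iInf_le (Fin.snoc f a) t.castSucc
    · simpa using iInf_le (Fin.snoc f a) (Fin.last n)
  · refine le_iInf fun t => ?_
    rcases Fin.eq_castSucc_or_eq_last t with ⟨t', rfl⟩ | rfl
    · simpa using inf_le_left.trans (iInf_le f t')
    · simp

private lemma chain_sub {d : ℕ} {A : Finset (Hyp d)} {𝒜 : ℕ → Finset (Hyp d)}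
    (hss : SSFiltration d A 𝒜) : ∀ l ≤ d, ∀ j ≤ l, 𝒜 j ⊆ 𝒜 l := by
  intro l
  induction l with
  | zero => intro _ j hj; interval_cases j; exact subset_rfl
  | succ n ih =>
    intro hld j hj
    rcases Nat.eq_or_lt_of_le hj with rfl | hjn
    · exact subset_rfl
    · exact (ih (by omega) j (by omega)).trans (hss.mono n (by omega))

private lemma mem_A_of_mem {d : ℕ} {A : Finset (Hyp d)} {𝒜 : ℕ → Finset (Hyp d)}
    (hss : SSFiltration d A 𝒜) {j : ℕ} (hj : j ≤ d) {B : Hyp d} (hB : B ∈ 𝒜 j) : B ∈ A :=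
  hss.top ▸ chain_sub hss d le_rfl j hj hB

private lemma aux {d : ℕ} {A : Finset (Hyp d)} {𝒜 : ℕ → Finset (Hyp d)}
    (hss : SSFiltration d A 𝒜) :
    ∀ k, k ≤ d → ∀ m, m ≤ d → ∀ X : Hyp d, (∃ S ⊆ 𝒜 m, X = S.inf id) →
    finrank ℝ X = d - k →
    ∃ (lev : Fin k → ℕ) (H : Fin k → Hyp d), StrictMono lev ∧
      (∀ t, 1 ≤ lev t ∧ lev t ≤ m ∧ H t ∈ 𝒜 (lev t) ∧ H t ∉ 𝒜 (lev t - 1)) ∧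
      (⨅ t, H t) = X := by
  intro k
  induction k with
  | zero =>
    intro _ m hm X hX hdim
    refine ⟨Fin.elim0, Fin.elim0, fun t => t.elim0, fun t => t.elim0, ?_⟩
    have hXtop : X = ⊤ := Submodule.eq_top_of_finrank_eq (by rw [hdim, totdim]; omega)
    simp [hXtop]
  | succ k ih =>
    intro hk m hm X hXS hdim
    obtain ⟨S, hSsub, hSX⟩ := hXS
    classical
    have hd1 : 1 ≤ d := by omega
    set T : ℕ → Finset (Hyp d) := fun j => (𝒜 j).filter (fun H => X ≤ H) with hT
    have hTle : ∀ j, X ≤ (T j).inf id :=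
      fun j => Finset.le_inf fun b hb => (Finset.mem_filter.mp hb).2
    have hST : S ⊆ T m := fun b hb =>
      Finset.mem_filter.mpr ⟨hSsub hb, hSX ▸ Finset.inf_le hb⟩
    have hTm : (T m).inf id = X := by
      refine le_antisymm ?_ (hTle m)
      calc (T m).inf id ≤ S.inf id := Finset.le_inf fun b hb => Finset.inf_le (hST hb)
        _ = X := hSX.symm
    have hex : ∃ j, (T j).inf id = X := ⟨m, hTm⟩
    set i := Nat.find hex with hi
    have hPi : (T i).inf id = X := Nat.find_spec hex
    have him : i ≤ m := Nat.find_min' hex hTm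
    have hXne : X ≠ ⊤ := by
      intro h
      rw [h, finrank_top, totdim] at hdim
      omega
    have hi1 : 1 ≤ i := by
      rcases Nat.eq_zero_or_pos i with h0 | h
      · exfalso
        rw [h0] at hPi
        have : T 0 = ∅ := by simp [hT, hss.zero]
        rw [this, Finset.inf_empty] at hPi
        exact hXne hPi.symm
      · exact h
    have hHk : ∃ Hk ∈ T i, Hk ∉ 𝒜 (i - 1) := by
      by_contra hcon
      push_neg at hcon
      have hsub : T i ⊆ T (i - 1) := fun b hb =>
        Finset.mem_filter.mpr ⟨hcon b hb, (Finset.mem_filter.mp hb).2⟩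
      have hP' : (T (i-1)).inf id = X := by
        refine le_antisymm ?_ (hTle _)
        calc (T (i-1)).inf id ≤ (T i).inf id :=
              Finset.le_inf fun b hb => Finset.inf_le (hsub hb)
          _ = X := hPi
      exact Nat.find_min hex (show i - 1 < i by omega) hP'
    obtain ⟨Hk, hHkT, hHknot⟩ := hHk
    have hHkA : Hk ∈ 𝒜 i := (Finset.mem_filter.mp hHkT).1
    have hXHk : X ≤ Hk := (Finset.mem_filter.mp hHkT).2
    have hHkhyp : finrank ℝ Hk = d - 1 :=
      hss.hyp Hk (mem_A_of_mem hss (him.trans hm) hHkA)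
    set Y : Hyp d := (T (i-1)).inf id with hY
    have hXY : X ≤ Y := hTle _
    have hXYH : Y ⊓ Hk = X := by
      refine le_antisymm ?_ (le_inf hXY hXHk)
      rw [← hPi]
      refine Finset.le_inf fun H' hH' => ?_
      obtain ⟨hH'i, hXH'⟩ := Finset.mem_filter.mp hH'
      show Y ⊓ Hk ≤ H'
      by_cases hc1 : H' = Hk
      · exact hc1 ▸ inf_le_right
      by_cases hc2 : H' ∈ 𝒜 (i-1)
      · exact inf_le_left.trans (Finset.inf_le (Finset.mem_filter.mpr ⟨hc2, hXH'⟩))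
      have hH'hyp : finrank ℝ H' = d - 1 :=
        hss.hyp H' (mem_A_of_mem hss (him.trans hm) hH'i)
      have hi2 : 2 ≤ i := by
        by_contra hlt
        have hieq : i = 1 := by omega
        rw [hieq] at hHkA hH'i
        have hr := hss.rank 1 le_rfl hd1
        unfold arrRank at hr
        have hle1 := sub_le_total ((𝒜 1).inf id)
        have hinf1 : finrank ℝ ((𝒜 1).inf id : Hyp d) = d - 1 := by omega
        have e1 : (𝒜 1).inf id = Hk :=
          Submodule.eq_of_le_of_finrank_le (Finset.inf_le hHkA) (by omega)
        have e2 : (𝒜 1).inf id = H' :=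
          Submodule.eq_of_le_of_finrank_le (Finset.inf_le hH'i) (by omega)
        exact hc1 (e2 ▸ e1)
      obtain ⟨H'', hH''mem, hle⟩ :=
        hss.ss i hi2 (him.trans hm) Hk hHkA H' hH'i (fun he => hc1 he.symm)
      have hH''hyp : finrank ℝ H'' = d - 1 :=
        hss.hyp H'' (mem_A_of_mem hss (by omega) hH''mem)
      have hXH'' : X ≤ H'' := le_trans (le_inf hXHk hXH') hle
      have hYH'' : Y ≤ H'' := Finset.inf_le (Finset.mem_filter.mpr ⟨hH''mem, hXH''⟩)
      have hne'' : Hk ≠ H'' := fun he => hHknot (he ▸ hH''mem)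
      have e1 : finrank ℝ (Hk ⊓ H' : Hyp d) = d - 2 :=
        inf_two_hyps hHkhyp hH'hyp (fun he => hc1 he.symm) hd1
      have e2 : finrank ℝ (Hk ⊓ H'' : Hyp d) = d - 2 :=
        inf_two_hyps hHkhyp hH''hyp hne'' hd1
      have hle2 : Hk ⊓ H' ≤ Hk ⊓ H'' := le_inf inf_le_left hle
      have heq : Hk ⊓ H' = Hk ⊓ H'' :=
        Submodule.eq_of_le_of_finrank_le hle2 (by omega)
      calc Y ⊓ Hk ≤ Hk ⊓ H'' := le_inf inf_le_right (inf_le_left.trans hYH'')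
        _ = Hk ⊓ H' := heq.symm
        _ ≤ H' := inf_le_right
    have hYd : finrank ℝ Y = d - k := by
      have h1 : finrank ℝ X ≤ finrank ℝ Y := Submodule.finrank_mono hXY
      have h2 := inf_with_hyp_ge Y Hk hHkhyp hd1
      rw [hXYH, hdim] at h2
      have h3 := sub_le_total Y
      by_cases heq : finrank ℝ Y = d - (k+1)
      · exfalso
        have hXeqY : X = Y :=
          Submodule.eq_of_le_of_finrank_le hXY (by omega)
        exact Nat.find_min hex (show i - 1 < i by omega) (hY ▸ hXeqY.symm)
      · omega
    obtain ⟨lev', H', hmono', hprop', hinf'⟩ :=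
      ih (by omega) (i-1) (by omega) Y ⟨T (i-1), Finset.filter_subset _ _, rfl⟩ hYd
    refine ⟨Fin.snoc lev' i, Fin.snoc H' Hk, ?_, ?_, ?_⟩
    · exact strictMono_snoc hmono' (fun t => by have := (hprop' t).2.1; omega)
    · intro t
      rcases Fin.eq_castSucc_or_eq_last t with ⟨t', rfl⟩ | rfl
      · simp only [Fin.snoc_castSucc]
        obtain ⟨a, b, c, e⟩ := hprop' t'
        exact ⟨a, le_trans b (by omega), c, e⟩
      · simp only [Fin.snoc_last]
        exact ⟨hi1, him, hHkA, hHknot⟩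
    · rw [iInf_snoc, hinf', hXYH]

end Aux

/-- Every element X of the intersection lattice of codimension k is the
intersection of k hyperplanes taken from k strictly increasing filtration levels. -/
theorem stmt5 (d k : ℕ) (A : Finset (Hyp d)) (𝒜 : ℕ → Finset (Hyp d))
    (hss : SSFiltration d A 𝒜) (hk : k ≤ d)
    (X : Hyp d) (hX : ∃ S ⊆ A, X = S.inf id)
    (hcodim : finrank ℝ X = d - k) :
    ∃ (lev : Fin k → ℕ) (H : Fin k → Hyp d), StrictMono lev ∧
      (∀ t, 1 ≤ lev t ∧ lev t ≤ d ∧ H t ∈ 𝒜 (lev t) ∧ H t ∉ 𝒜 (lev t - 1)) ∧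
      (⨅ t, H t) = X := by
  obtain ⟨S, hS, hSX⟩ := hX
  obtain ⟨lev, H, h1, h2, h3⟩ := aux hss k hk d le_rfl X ⟨S, hss.top ▸ hS, hSX⟩ hcodim
  exact ⟨lev, H, h1, h2, h3⟩
end

section
/- Let A be a central supersolvable arrangement, X ∈ L(A) an intersection of codimension k, and write the multiset of hyperplanes containing X partitioned into classes [H]_X = {H' ∈ A_{i} \ A_{i-1} : X ⊆ H'} according to the filtration level. If (H_1, ..., H_k) and (H'_1, ..., H'_k) are two nbc-tuples (with respect to a filtration-compatible order) both with intersection equal to X, then for each j the hyperplanes H_j and H'_j lie in the same difference A_{i_j} \ A_{i_j - 1}; i.e., the k-tuple of classes ([H_1]_X, ..., [H_k]_X) depends only on X. -/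
open Module Classical

namespace Stmt6Aux

variable {d : ℕ} {A : Finset (Hyp d)} {𝒜 : ℕ → Finset (Hyp d)}

lemma mono' (hss : SSFiltration d A 𝒜) : ∀ i j, i ≤ j → j ≤ d → 𝒜 i ⊆ 𝒜 j := by
  intro i j hij hjd
  induction j with
  | zero =>
    have : i = 0 := by omega
    subst this; exact Finset.Subset.refl _
  | succ n ih =>
    rcases Nat.lt_or_ge i (n + 1) with h | h
    · exact (ih (by omega) (by omega)).trans (hss.mono n (by omega))
    · have : i = n + 1 := by omega
      subst this; exact Finset.Subset.refl _

lemma finrank_le_d (W : Hyp d) : finrank ℝ W ≤ d := by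
  have := Submodule.finrank_le W
  simpa [Module.finrank_fin_fun] using this

lemma Zrank (hss : SSFiltration d A 𝒜) {i : ℕ} (hi : i ≤ d) :
    finrank ℝ ((𝒜 i).inf id : Hyp d) + i = d := by
  rcases Nat.eq_zero_or_pos i with rfl | hpos
  · rw [hss.zero]
    have h0 : ((∅ : Finset (Hyp d)).inf id : Hyp d) = ⊤ := Finset.inf_empty
    rw [h0]; simp [finrank_top, Module.finrank_fin_fun]
  · have h := hss.rank i hpos hi
    unfold arrRank at h
    have := finrank_le_d ((𝒜 i).inf id : Hyp d)
    omega

lemma hypA (hss : SSFiltration d A 𝒜) {l : ℕ} (hl : l ≤ d) {H : Hyp d} (hH : H ∈ 𝒜 l) :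
    finrank ℝ H = d - 1 :=
  hss.hyp H (by rw [← hss.top]; exact mono' hss l d hl le_rfl hH)

/-- Key supersolvability lemma: a hyperplane of level `l` containing the center
`Z (l-1)` must actually lie in `𝒜 (l-1)`. -/
lemma S' (hss : SSFiltration d A 𝒜) {l : ℕ} (h1 : 1 ≤ l) (hld : l ≤ d)
    {H : Hyp d} (hH : H ∈ 𝒜 l) (hZ : ((𝒜 (l - 1)).inf id : Hyp d) ≤ H) :
    H ∈ 𝒜 (l - 1) := by
  by_contra hnot
  have hd1 : 1 ≤ d := le_trans h1 hld
  have hHrank : finrank ℝ H = d - 1 := hypA hss hld hH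
  rcases Nat.lt_or_ge l 2 with hl2 | hl2
  · -- l = 1 : Z 0 = ⊤ ≤ H forces H = ⊤, impossible for a hyperplane
    have hl1 : l = 1 := by omega
    subst hl1
    simp only [Nat.sub_self, hss.zero, Finset.inf_empty, top_le_iff] at hZ
    rw [hZ, finrank_top, Module.finrank_fin_fun] at hHrank
    omega
  · -- l ≥ 2
    have hexK : ∃ K ∈ 𝒜 l, ¬ ((𝒜 (l - 1)).inf id : Hyp d) ≤ K := by
      by_contra hall
      push_neg at hall
      have hle : ((𝒜 (l - 1)).inf id : Hyp d) ≤ (𝒜 l).inf id :=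
        Finset.le_inf fun K hK => hall K hK
      have h1' := Zrank hss (show l - 1 ≤ d by omega)
      have h2' := Zrank hss hld
      have := Submodule.finrank_mono hle
      omega
    obtain ⟨K, hKl, hKZ⟩ := hexK
    have hKH : H ≠ K := fun h => hKZ (h ▸ hZ)
    obtain ⟨K'', hK''mem, hK''⟩ := hss.ss l hl2 hld H hH K hKl hKH
    have hKrank : finrank ℝ K = d - 1 := hypA hss hld hKl
    have hK''rank : finrank ℝ K'' = d - 1 := hypA hss (by omega) hK''mem
    have hsupinf := Submodule.finrank_sup_add_finrank_inf_eq H K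
    have hsuple : finrank ℝ (H ⊔ K : Hyp d) ≤ d := finrank_le_d _
    have hinfge : d - 2 ≤ finrank ℝ (H ⊓ K : Hyp d) := by omega
    set W := ((𝒜 (l - 1)).inf id : Hyp d) ⊔ (H ⊓ K) with hWdef
    have hWH : W ≤ H := sup_le hZ inf_le_left
    have hlt : (H ⊓ K : Hyp d) < W := by
      refine lt_of_le_of_ne le_sup_right fun he => ?_
      exact hKZ ((le_sup_left.trans he.ge).trans inf_le_right)
    have hWrank := Submodule.finrank_lt_finrank_of_lt hlt
    have hWeq : W = H := Submodule.eq_of_le_of_finrank_le hWH (by omega)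
    have hHK'' : H ≤ K'' := by
      rw [← hWeq]
      exact sup_le (Finset.inf_le hK''mem) hK''
    have : H = K'' := Submodule.eq_of_le_of_finrank_le hHK'' (by omega)
    exact hnot (this ▸ hK''mem)

/-- Counting lemma: hyperplanes of level `> i` cut the center `Z i` independently. -/
lemma countL (hss : SSFiltration d A 𝒜) {k : ℕ} (H : Fin k → Hyp d) (lev : Fin k → ℕ)
    (hlev : StrictMono lev)
    (hmem : ∀ t, 1 ≤ lev t ∧ lev t ≤ d ∧ H t ∈ 𝒜 (lev t) ∧ H t ∉ 𝒜 (lev t - 1))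
    {i : ℕ} (hi : i ≤ d) :
    ∀ s : Finset (Fin k), (∀ t ∈ s, i < lev t) →
      finrank ℝ (((𝒜 i).inf id ⊓ s.inf H : Hyp d)) + (i + s.card) = d := by
  intro s
  induction s using Finset.strongInductionOn with
  | _ s ih =>
    intro hs
    rcases s.eq_empty_or_nonempty with rfl | hne
    · rw [Finset.inf_empty, inf_top_eq, Finset.card_empty, Nat.add_zero]
      exact Zrank hss hi
    · have ht0 : s.max' hne ∈ s := s.max'_mem hne
      set t0 := s.max' hne with ht0def
      set l := lev t0 with hldef
      have hil : i < l := hs t0 ht0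
      have hld : l ≤ d := (hmem t0).2.1
      have hl1 : 1 ≤ l := (hmem t0).1
      set s' := s.erase t0 with hs'def
      set W := ((𝒜 i).inf id ⊓ s'.inf H : Hyp d) with hWdef
      have ihW : finrank ℝ W + (i + s'.card) = d :=
        ih s' (Finset.erase_ssubset ht0) fun t hts' => hs t (Finset.mem_of_mem_erase hts')
      have hZW : ((𝒜 (l - 1)).inf id : Hyp d) ≤ W := by
        refine le_inf (Finset.inf_mono (mono' hss i (l - 1) (by omega) (by omega)))
          (Finset.le_inf fun u hu => ?_)
        have hu_lt : u < t0 :=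
          lt_of_le_of_ne (s.le_max' u (Finset.mem_of_mem_erase hu)) (Finset.ne_of_mem_erase hu)
        have hlu : lev u ≤ l - 1 := by have := hlev hu_lt; omega
        exact Finset.inf_le (mono' hss (lev u) (l - 1) hlu (by omega) (hmem u).2.2.1)
      have hnotle : ¬ W ≤ H t0 := fun hle =>
        (hmem t0).2.2.2 (S' hss hl1 hld (hmem t0).2.2.1 (hZW.trans hle))
      have hHrank : finrank ℝ (H t0) = d - 1 := hypA hss hld (hmem t0).2.2.1
      have hsupinf := Submodule.finrank_sup_add_finrank_inf_eq W (H t0)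
      have hsuple : finrank ℝ (W ⊔ H t0 : Hyp d) ≤ d := finrank_le_d _
      have hltsup : (H t0 : Hyp d) < W ⊔ H t0 :=
        lt_of_le_of_ne le_sup_right fun he => hnotle (le_sup_left.trans he.ge)
      have hsupgt := Submodule.finrank_lt_finrank_of_lt hltsup
      have hins : s = insert t0 s' := (Finset.insert_erase ht0).symm
      rw [hins, Finset.inf_insert, Finset.card_insert_of_notMem (Finset.notMem_erase _ _)]
      have heq : ((𝒜 i).inf id ⊓ (H t0 ⊓ s'.inf H) : Hyp d) = W ⊓ H t0 := by
        rw [hWdef, inf_left_comm, inf_comm]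
      rw [heq]
      have hcard : (s.erase t0).card = s'.card := rfl
      omega

end Stmt6Aux

/-- Two nbc-tuples with the same intersection X have the same tuple of
filtration levels; the class tuple depends only on X. -/
theorem stmt6 (d k : ℕ) (A : Finset (Hyp d)) (𝒜 : ℕ → Finset (Hyp d))
    (hss : SSFiltration d A 𝒜) (hk : k ≤ d)
    (X : Hyp d) (hcodim : finrank ℝ X = d - k)
    (H H' : Fin k → Hyp d) (lev lev' : Fin k → ℕ)
    (hlev : StrictMono lev) (hlev' : StrictMono lev')
    (hmem : ∀ t, 1 ≤ lev t ∧ lev t ≤ d ∧ H t ∈ 𝒜 (lev t) ∧ H t ∉ 𝒜 (lev t - 1))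
    (hmem' : ∀ t, 1 ≤ lev' t ∧ lev' t ≤ d ∧ H' t ∈ 𝒜 (lev' t) ∧ H' t ∉ 𝒜 (lev' t - 1))
    (hint : (⨅ t, H t) = X) (hint' : (⨅ t, H' t) = X) :
    lev = lev' :=
  by
  classical
  have key : ∀ i ≤ d, ((Finset.univ.filter fun t => i < lev t).card : ℕ)
      = (Finset.univ.filter fun t => i < lev' t).card := by
    intro i hi
    have e1 := Stmt6Aux.countL hss H lev hlev hmem hi
      (Finset.univ.filter fun t => i < lev t) (fun t ht => (Finset.mem_filter.mp ht).2)
    have e2 := Stmt6Aux.countL hss H' lev' hlev' hmem' hi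
      (Finset.univ.filter fun t => i < lev' t) (fun t ht => (Finset.mem_filter.mp ht).2)
    have r1 : ∀ (G : Fin k → Hyp d) (lv : Fin k → ℕ),
        (∀ t, 1 ≤ lv t ∧ lv t ≤ d ∧ G t ∈ 𝒜 (lv t) ∧ G t ∉ 𝒜 (lv t - 1)) →
        (⨅ t, G t) = X →
        ((𝒜 i).inf id ⊓ (Finset.univ.filter fun t => i < lv t).inf G : Hyp d)
          = ((𝒜 i).inf id ⊓ X) := by
      intro G lv hm hX
      apply le_antisymm
      · refine le_inf inf_le_left ?_
        rw [← hX]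
        refine le_iInf fun t => ?_
        by_cases h : i < lv t
        · exact inf_le_right.trans (Finset.inf_le (by simp [h]))
        · refine inf_le_left.trans (Finset.inf_le ?_)
          exact Stmt6Aux.mono' hss (lv t) i (by omega) hi (hm t).2.2.1
      · refine le_inf inf_le_left (Finset.le_inf fun t ht => ?_)
        refine inf_le_right.trans ?_
        rw [← hX]; exact iInf_le G t
    rw [r1 H lev hmem hint] at e1
    rw [r1 H' lev' hmem' hint'] at e2
    omega
  have keyle : ∀ i ≤ d, ((Finset.univ.filter fun t => lev t ≤ i).card : ℕ)
      = (Finset.univ.filter fun t => lev' t ≤ i).card := by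
    intro i hi
    have h1 := Finset.card_filter_add_card_filter_not
      (s := (Finset.univ : Finset (Fin k))) (p := fun t => i < lev t)
    have h2 := Finset.card_filter_add_card_filter_not
      (s := (Finset.univ : Finset (Fin k))) (p := fun t => i < lev' t)
    have e1 : (Finset.univ.filter fun t => lev t ≤ i)
        = (Finset.univ.filter fun t => ¬ i < lev t) := by simp [Nat.not_lt]
    have e2 : (Finset.univ.filter fun t => lev' t ≤ i)
        = (Finset.univ.filter fun t => ¬ i < lev' t) := by simp [Nat.not_lt]
    rw [e1, e2]
    have := key i hi
    omega
  have char : ∀ (lv : Fin k → ℕ), StrictMono lv → ∀ (t : Fin k) (i : ℕ),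
      (lv t ≤ i ↔ (t : ℕ) < (Finset.univ.filter fun s => lv s ≤ i).card) := by
    intro lv hlv t i
    constructor
    · intro h
      have hsub : Finset.Iic t ⊆ Finset.univ.filter fun s => lv s ≤ i := by
        intro u hu
        simp only [Finset.mem_filter, Finset.mem_univ, true_and]
        exact le_trans (hlv.monotone (Finset.mem_Iic.mp hu)) h
      have hc := Finset.card_le_card hsub
      rw [Fin.card_Iic] at hc
      omega
    · intro h
      by_contra hcon
      push_neg at hcon
      have hsub : (Finset.univ.filter fun s => lv s ≤ i) ⊆ Finset.Iio t := by
        intro u hu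
        simp only [Finset.mem_filter] at hu
        exact Finset.mem_Iio.mpr (hlv.lt_iff_lt.mp (lt_of_le_of_lt hu.2 hcon))
      have hc := Finset.card_le_card hsub
      rw [Fin.card_Iio] at hc
      omega
  funext t
  have h1 : lev t ≤ lev' t := by
    have hd : lev' t ≤ d := (hmem' t).2.1
    have := (char lev' hlev' t (lev' t)).mp le_rfl
    rw [← keyle _ hd] at this
    exact (char lev hlev t (lev' t)).mpr this
  have h2 : lev' t ≤ lev t := by
    have hd : lev t ≤ d := (hmem t).2.1
    have := (char lev hlev t (lev t)).mp le_rfl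
    rw [keyle _ hd] at this
    exact (char lev' hlev' t (lev t)).mpr this
  omega
end

section
/- Let A be a real arrangement, C a chamber, and F a face. There exists a unique chamber C.F containing F in its closure and lying in the same chamber of the subarrangement A_F as C (where A_F = {H ∈ A : F ⊆ H}). -/
open Module

variable {d : ℕ} {ι : Type}

/-- The (closed) stratum of a point `x` in the affine arrangement given by the
equations `f i = c i`: points whose sign vector agrees with that of `x`. -/
def stratum (f : ι → ((Fin d → ℝ) →ₗ[ℝ] ℝ)) (c : ι → ℝ) (x : Fin d → ℝ) :
    Set (Fin d → ℝ) :=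
  {y | ∀ i, (f i y = c i ↔ f i x = c i) ∧ (c i < f i y ↔ c i < f i x)}

/-- A chamber of the affine arrangement: the stratum of a point lying on no
hyperplane. -/
def IsChamberA (f : ι → ((Fin d → ℝ) →ₗ[ℝ] ℝ)) (c : ι → ℝ) (D : Set (Fin d → ℝ)) : Prop :=
  ∃ z : Fin d → ℝ, (∀ i, f i z ≠ c i) ∧ D = stratum f c z

/-- The hyperplane indexed by `i` separates `C` and `D`. -/
def SepHyp (f : ι → ((Fin d → ℝ) →ₗ[ℝ] ℝ)) (c : ι → ℝ) (i : ι)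
    (C D : Set (Fin d → ℝ)) : Prop :=
  ∃ u ∈ C, ∃ v ∈ D, (f i u - c i) * (f i v - c i) < 0

private lemma stratum_eq_of {f : ι → ((Fin d → ℝ) →ₗ[ℝ] ℝ)} {c : ι → ℝ} {w w' : Fin d → ℝ}
    (h : ∀ i, (f i w' = c i ↔ f i w = c i) ∧ (c i < f i w' ↔ c i < f i w)) :
    stratum f c w' = stratum f c w := by
  ext y
  constructor
  · intro hy i; exact ⟨(hy i).1.trans (h i).1, (hy i).2.trans (h i).2⟩
  · intro hy i; exact ⟨(hy i).1.trans (h i).1.symm, (hy i).2.trans (h i).2.symm⟩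

private lemma mul_sub_pos' {a b e : ℝ} (ha : a ≠ e) (hb : b ≠ e) (h : e < a ↔ e < b) :
    0 < (a - e) * (b - e) := by
  rcases ha.lt_or_gt with h1 | h1
  · have h2 : b < e := by
      rcases hb.lt_or_gt with h2 | h2
      · exact h2
      · exact absurd (h.mpr h2) (not_lt.2 h1.le)
    exact mul_pos_of_neg_of_neg (sub_neg.2 h1) (sub_neg.2 h2)
  · exact mul_pos (sub_pos.2 h1) (sub_pos.2 (h.mp h1))

private lemma sign_iff_of_not_neg {a b e : ℝ} (ha : a ≠ e) (hb : b ≠ e)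
    (h : ¬ (a - e) * (b - e) < 0) : (e < a ↔ e < b) := by
  rcases ha.lt_or_gt with h1 | h1 <;> rcases hb.lt_or_gt with h2 | h2
  · exact iff_of_false (not_lt.2 h1.le) (not_lt.2 h2.le)
  · exact absurd (mul_neg_of_neg_of_pos (sub_neg.2 h1) (sub_pos.2 h2)) h
  · exact absurd (mul_neg_of_pos_of_neg (sub_pos.2 h1) (sub_neg.2 h2)) h
  · exact iff_of_true h1 h2

private lemma le_of_mem_closure' {g : (Fin d → ℝ) →ₗ[ℝ] ℝ} {a : ℝ} {D : Set (Fin d → ℝ)}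
    {x : Fin d → ℝ} (hx : x ∈ closure D) (hD : ∀ y ∈ D, a < g y) : a ≤ g x :=
  closure_minimal (fun y hy => (hD y hy).le)
    (isClosed_le continuous_const g.continuous_of_finiteDimensional) hx

private lemma ge_of_mem_closure' {g : (Fin d → ℝ) →ₗ[ℝ] ℝ} {a : ℝ} {D : Set (Fin d → ℝ)}
    {x : Fin d → ℝ} (hx : x ∈ closure D) (hD : ∀ y ∈ D, g y < a) : g x ≤ a :=
  closure_minimal (fun y hy => (hD y hy).le)
    (isClosed_le g.continuous_of_finiteDimensional continuous_const) hx

/-- For a real arrangement, a chamber C and a face F (the stratum of a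
point x), there is a unique chamber C.F containing F in its closure and separated
from C by no hyperplane of A_F. -/
theorem stmt9 [Fintype ι] (f : ι → ((Fin d → ℝ) →ₗ[ℝ] ℝ)) (c : ι → ℝ)
    (hnz : ∀ i, f i ≠ 0)
    (x : Fin d → ℝ)
    (C : Set (Fin d → ℝ)) (hC : IsChamberA f c C) :
    ∃! D : Set (Fin d → ℝ), IsChamberA f c D ∧ stratum f c x ⊆ closure D ∧
      ∀ i : ι, f i x = c i → ¬ SepHyp f c i C D := by
  classical
  obtain ⟨z, hz, rfl⟩ := hC
  set σ : ι → Prop := fun i => if f i x = c i then c i < f i z else c i < f i x with hσ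
  -- continuity of the line
  have hline : ∀ y : Fin d → ℝ,
      Filter.Tendsto (fun t : ℝ => y + t • (z - x)) (nhdsWithin (0:ℝ) (Set.Ioi (0:ℝ))) (nhds y) := by
    intro y
    have hcont : Continuous fun t : ℝ => y + t • (z - x) :=
      continuous_const.add (continuous_id.smul continuous_const)
    simpa using (hcont.tendsto (0:ℝ)).mono_left (nhdsWithin_le_nhds (s := Set.Ioi (0:ℝ)))
  have hval : ∀ (y : Fin d → ℝ) (t : ℝ) (i : ι),
      f i (y + t • (z - x)) = f i y + t * (f i z - f i x) := by
    intro y t i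
    simp [map_add, map_smul, map_sub, smul_eq_mul, mul_sub]
  have key : ∀ y : Fin d → ℝ, y ∈ stratum f c x →
      ∀ᶠ t in nhdsWithin (0:ℝ) (Set.Ioi (0:ℝ)), ∀ i,
        f i (y + t • (z - x)) ≠ c i ∧ (c i < f i (y + t • (z - x)) ↔ σ i) := by
    intro y hy
    rw [Filter.eventually_all]
    intro i
    by_cases h : f i x = c i
    · have hyc : f i y = c i := (hy i).1.mpr h
      filter_upwards [self_mem_nhdsWithin] with t ht
      have ht0 : (0:ℝ) < t := ht
      have hv : f i (y + t • (z - x)) = c i + t * (f i z - c i) := by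
        rw [hval, hyc, h]
      constructor
      · rw [hv]
        intro heq
        have h1 : t * (f i z - c i) = 0 := by linarith
        have h2 : f i z - c i = 0 := by
          rcases mul_eq_zero.mp h1 with h' | h'
          · exact absurd h' (ne_of_gt ht0)
          · exact h'
        exact hz i (by linarith)
      · rw [hv, hσ]
        simp only [if_pos h]
        constructor
        · intro hlt
          by_contra hc
          have : f i z - c i ≤ 0 := by linarith [not_lt.mp hc]
          nlinarith
        · intro hlt
          nlinarith
    · have hyne : f i y ≠ c i := fun he => h ((hy i).1.mp he)
      have hiff : c i < f i y ↔ c i < f i x := (hy i).2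
      have htend : Filter.Tendsto (fun t : ℝ => f i (y + t • (z - x)))
          (nhdsWithin (0:ℝ) (Set.Ioi (0:ℝ))) (nhds (f i y)) :=
        ((f i).continuous_of_finiteDimensional.tendsto y).comp (hline y)
      rcases hyne.lt_or_gt with hlt | hlt
      · filter_upwards [htend.eventually (gt_mem_nhds hlt)] with t ht
        refine ⟨ne_of_lt ht, ?_⟩
        rw [hσ]; simp only [if_neg h]
        exact iff_of_false (not_lt.2 ht.le) (fun hc => absurd (hiff.mpr hc) (not_lt.2 hlt.le))
      · filter_upwards [htend.eventually (lt_mem_nhds hlt)] with t ht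
        refine ⟨(ne_of_lt ht).symm, ?_⟩
        rw [hσ]; simp only [if_neg h]
        exact iff_of_true ht (hiff.mp hlt)
  have xmem : x ∈ stratum f c x := fun i => ⟨Iff.rfl, Iff.rfl⟩
  obtain ⟨ε, hε⟩ := (key x xmem).exists
  set w : Fin d → ℝ := x + ε • (z - x) with hwdef
  have hwne : ∀ i, f i w ≠ c i := fun i => (hε i).1
  have hwsign : ∀ i, c i < f i w ↔ σ i := fun i => (hε i).2
  have hclosure : stratum f c x ⊆ closure (stratum f c w) := by
    intro y hy
    refine mem_closure_of_tendsto (hline y) ?_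
    filter_upwards [key y hy] with t ht
    intro i
    exact ⟨iff_of_false (ht i).1 (hwne i), (ht i).2.trans (hwsign i).symm⟩
  have zmem : z ∈ stratum f c z := fun i => ⟨Iff.rfl, Iff.rfl⟩
  refine ⟨stratum f c w, ⟨⟨w, hwne, rfl⟩, hclosure, ?_⟩, ?_⟩
  · intro i hi ⟨u, hu, v, hv, hlt⟩
    have hune : f i u ≠ c i := fun he => hz i ((hu i).1.mp he)
    have hvne : f i v ≠ c i := fun he => hwne i ((hv i).1.mp he)
    have husign : c i < f i u ↔ c i < f i v := by
      rw [(hu i).2, (hv i).2, hwsign i, hσ]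
      simp [if_pos hi]
    exact absurd hlt (not_lt.2 (mul_sub_pos' hune hvne husign).le)
  · rintro D' ⟨⟨w', hw', rfl⟩, hcl', hsep'⟩
    apply stratum_eq_of
    intro i
    refine ⟨iff_of_false (hw' i) (hwne i), ?_⟩
    rw [hwsign i, hσ]
    by_cases h : f i x = c i
    · simp only [if_pos h]
      have hns : ¬ (f i z - c i) * (f i w' - c i) < 0 :=
        fun hh => hsep' i h ⟨z, zmem, w', (fun j => ⟨Iff.rfl, Iff.rfl⟩), hh⟩
      exact (sign_iff_of_not_neg (hz i) (hw' i) hns).symm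
    · simp only [if_neg h]
      have hxcl : x ∈ closure (stratum f c w') := hcl' xmem
      rcases (hw' i).lt_or_gt with hlt | hlt
      · have hall : ∀ y ∈ stratum f c w', f i y < c i := by
          intro y hy
          have h1 := (hy i).1
          have h2 := (hy i).2
          rcases lt_trichotomy (f i y) (c i) with h' | h' | h'
          · exact h'
          · exact absurd (h1.mp h') (ne_of_lt hlt)
          · exact absurd (h2.mp h') (not_lt.2 hlt.le)
        have := ge_of_mem_closure' hxcl hall
        exact iff_of_false (not_lt.2 hlt.le) (not_lt.2 (lt_of_le_of_ne this h).le)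
      · have hall : ∀ y ∈ stratum f c w', c i < f i y := by
          intro y hy
          rcases lt_trichotomy (f i y) (c i) with h' | h' | h'
          · exact absurd ((hy i).2.mpr hlt) (not_lt.2 h'.le)
          · exact absurd ((hy i).1.mp h') (ne_of_gt hlt)
          · exact h'
        have := le_of_mem_closure' hxcl hall
        exact iff_of_true hlt (lt_of_le_of_ne this (Ne.symm h))
end
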